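/- For n ≥ 8 with n not prime and n−1 not prime, the proper power graph of S_n (vertices: nontrivial permutations, edges: one a power of the other) is connected; equivalently, the power graph of S_n is 2-connected. -/

import Mathlib

/-!
If `x` and `y` commute and have coprime orders, both are powers of `x * y`, so they lie in the
same component of the proper power graph. Every nontrivial permutation is joined to a power of
prime order, and from there to a transposition through such commuting pairs: an odd-order
permutation with two fixed points `u, v` commutes with `(u v)`; an involution commutes with an
element of order 3 (a 3-cycle on three fixed points, or a cyclic shuffle of three of its
2-cycles), which has two fixed points when `n ≥ 8`; and an element of odd prime order `p` with at
most one fixed point has at least two `p`-cycles, because neither `n` nor `n - 1` is prime, so it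
commutes with the involution exchanging two of them. Finally any two transpositions commute with
a common 3-cycle.
-/

def properPowerGraph (G : Type*) [Group G] :
    SimpleGraph {g : G // g ≠ 1} where
  Adj x y := x ≠ y ∧ ((∃ m : ℕ, (x : G) = (y : G) ^ m) ∨
    (∃ m : ℕ, (y : G) = (x : G) ^ m))
  symm := by
    constructor
    rintro x y ⟨hxy, h⟩
    exact ⟨hxy.symm, h.symm⟩
  loopless := by constructor; rintro x ⟨hx, -⟩; exact hx rfl

open Equiv Finset

section PowerGraph

variable {G : Type*} [Group G]

lemma properPowerGraph_reachable_of_eq_pow {x y : {g : G // g ≠ 1}} {m : ℕ}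
    (h : (x : G) = (y : G) ^ m) : (properPowerGraph G).Reachable x y := by
  by_cases hxy : x = y
  · exact hxy ▸ .refl _
  · exact SimpleGraph.Adj.reachable ⟨hxy, .inl ⟨m, h⟩⟩

lemma Commute.exists_pow_mul_eq_left {g h : G} (hc : Commute g h)
    (hco : (orderOf g).Coprime (orderOf h)) : ∃ m : ℕ, (g * h) ^ m = g := by
  obtain ⟨m, hm⟩ := exists_pow_eq_self_of_coprime hco.symm
  exact ⟨orderOf h * m, by rw [pow_mul, hc.mul_pow, pow_orderOf_eq_one, mul_one, hm]⟩

lemma properPowerGraph_reachable_of_commute_of_coprime {x y : {g : G // g ≠ 1}}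
    (hc : Commute (x : G) y) (hco : (orderOf (x : G)).Coprime (orderOf (y : G))) :
    (properPowerGraph G).Reachable x y := by
  obtain ⟨m, hm⟩ := hc.exists_pow_mul_eq_left hco
  obtain ⟨k, hk⟩ := hc.symm.exists_pow_mul_eq_left hco.symm
  let z : {g : G // g ≠ 1} := ⟨x * y, fun h => x.2 (by rw [← hm, h, one_pow])⟩
  have hxz : (properPowerGraph G).Reachable x z := properPowerGraph_reachable_of_eq_pow hm.symm
  have hyz : (properPowerGraph G).Reachable y z :=
    properPowerGraph_reachable_of_eq_pow (m := k) (by rw [← hk, hc.symm.eq])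
  exact hxz.trans hyz.symm

end PowerGraph

namespace Finset

variable {α : Type*} [DecidableEq α] [Fintype α]

lemma exists_pair_notMem_of_card_add_two_le (s : Finset α) (h : #s + 2 ≤ Fintype.card α) :
    ∃ x y, x ≠ y ∧ x ∉ s ∧ y ∉ s := by
  obtain ⟨t, hts, ht⟩ := exists_subset_card_eq (s := sᶜ) (n := 2) (by rw [card_compl]; omega)
  obtain ⟨x, y, hxy, rfl⟩ := card_eq_two.mp ht
  simp only [insert_subset_iff, singleton_subset_iff, mem_compl] at hts
  exact ⟨x, y, hxy, hts⟩

lemma exists_triple_notMem_of_card_add_three_le (s : Finset α) (h : #s + 3 ≤ Fintype.card α) :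
    ∃ x y z, x ≠ y ∧ x ≠ z ∧ y ≠ z ∧ x ∉ s ∧ y ∉ s ∧ z ∉ s := by
  obtain ⟨t, hts, ht⟩ := exists_subset_card_eq (s := sᶜ) (n := 3) (by rw [card_compl]; omega)
  obtain ⟨x, y, z, hxy, hxz, hyz, rfl⟩ := card_eq_three.mp ht
  simp only [insert_subset_iff, singleton_subset_iff, mem_compl] at hts
  exact ⟨x, y, z, hxy, hxz, hyz, hts⟩

end Finset

namespace Equiv.Perm

variable {α : Type*} [DecidableEq α] [Fintype α]

lemma card_support_eq_card_cycleFactorsFinset_mul {σ : Perm α} (hp : (orderOf σ).Prime) :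
    #σ.support = #σ.cycleFactorsFinset * orderOf σ := by
  obtain ⟨m, hm⟩ := cycleType_prime_order hp
  have hcard : Multiset.card σ.cycleType = #σ.cycleFactorsFinset := by
    rw [cycleType_def, Multiset.card_map]; rfl
  rw [← sum_cycleType, hm, Multiset.sum_replicate, smul_eq_mul, ← hcard, hm,
    Multiset.card_replicate]

lemma exists_commute_orderOf_eq_of_perm_cycleFactorsFinset {σ : Perm α} (hp : (orderOf σ).Prime)
    (τ : Perm σ.cycleFactorsFinset) :
    ∃ k : Perm α, Commute σ k ∧ orderOf k = orderOf τ ∧ #k.support = #τ.support * orderOf σ := by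
  obtain ⟨m, hm⟩ := cycleType_prime_order hp
  have hcycle (c : σ.cycleFactorsFinset) : #c.1.support = orderOf σ := by
    have hc : #c.1.support ∈ σ.cycleType := Multiset.mem_map_of_mem (card ∘ support) c.2
    exact Multiset.eq_of_mem_replicate (hm ▸ hc)
  -- `Basis.ofPermHom` lifts a length-preserving permutation of the cycles of `σ` injectively
  -- into the centralizer of `σ`.
  obtain ⟨a⟩ := Basis.nonempty σ
  let τ' : OnCycleFactors.range_toPermHom' σ := ⟨τ, fun c => by rw [hcycle, hcycle]⟩
  have hinj : Function.Injective a.ofPermHom := fun x y hxy => Subtype.ext <| by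
    rw [← a.toPermHom_apply_toCentralizer x, ← a.toPermHom_apply_toCentralizer y]
    exact congrArg _ (Subtype.ext hxy)
  refine ⟨a.ofPermHom τ', (Subgroup.mem_centralizer_singleton_iff.mp
    (a.ofPermHom_mem_centralizer τ')).symm, ?_, ?_⟩
  · rw [orderOf_injective _ hinj]
    exact Subgroup.orderOf_mk τ _
  · rw [a.card_ofPermHom_support, sum_congr rfl fun c _ => hcycle c, sum_const, smul_eq_mul]

lemma properPowerGraph_reachable_swap_of_odd_orderOf (σ : {g : Perm α // g ≠ 1})
    (hodd : Odd (orderOf σ.1)) {u v : α} (huv : u ≠ v) (hu : σ.1 u = u) (hv : σ.1 v = v) :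
    (properPowerGraph (Perm α)).Reachable σ ⟨swap u v, swap_eq_one_iff.not.mpr huv⟩ := by
  refine properPowerGraph_reachable_of_commute_of_coprime (Disjoint.commute fun x => ?_) ?_
  · by_cases hx : x = u ∨ x = v
    · rcases hx with rfl | rfl
      exacts [.inl hu, .inl hv]
    · push Not at hx
      exact .inr (swap_apply_of_ne_of_ne hx.1 hx.2)
  · rw [IsSwap.orderOf ⟨u, v, huv, rfl⟩]
    exact Nat.coprime_two_right.mpr hodd

lemma exists_isSwap_properPowerGraph_reachable_of_odd_orderOf (σ : {g : Perm α // g ≠ 1})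
    (hodd : Odd (orderOf σ.1)) (hσ : #σ.1.support + 2 ≤ Fintype.card α) :
    ∃ τ : {g : Perm α // g ≠ 1}, τ.1.IsSwap ∧ (properPowerGraph (Perm α)).Reachable σ τ := by
  obtain ⟨u, v, huv, hu, hv⟩ := exists_pair_notMem_of_card_add_two_le _ hσ
  exact ⟨_, ⟨u, v, huv, rfl⟩, properPowerGraph_reachable_swap_of_odd_orderOf σ hodd huv
    (notMem_support.mp hu) (notMem_support.mp hv)⟩

lemma properPowerGraph_reachable_of_isSwap (h7 : 7 ≤ Fintype.card α)
    {τ τ' : {g : Perm α // g ≠ 1}} (hτ : τ.1.IsSwap) (hτ' : τ'.1.IsSwap) :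
    (properPowerGraph (Perm α)).Reachable τ τ' := by
  obtain ⟨u, v, huv, hτ⟩ := hτ
  obtain ⟨u', v', huv', hτ'⟩ := hτ'
  obtain rfl : τ = ⟨swap u v, swap_eq_one_iff.not.mpr huv⟩ := Subtype.ext hτ
  obtain rfl : τ' = ⟨swap u' v', swap_eq_one_iff.not.mpr huv'⟩ := Subtype.ext hτ'
  obtain ⟨x, y, z, hxy, hxz, hyz, hx, hy, hz⟩ :=
    exists_triple_notMem_of_card_add_three_le {u, v, u', v'} (by grind [card_le_four])
  simp only [mem_insert, mem_singleton, not_or] at hx hy hz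
  have hc := isThreeCycle_swap_mul_swap_same hxy hxz hyz
  have hodd : Odd (orderOf (swap x y * swap x z)) := by rw [hc.orderOf]; decide
  have hfix {w : α} (hwx : x ≠ w) (hwy : y ≠ w) (hwz : z ≠ w) : (swap x y * swap x z) w = w := by
    rw [mul_apply, swap_apply_of_ne_of_ne hwx.symm hwz.symm,
      swap_apply_of_ne_of_ne hwx.symm hwy.symm]
  have hc_uv := properPowerGraph_reachable_swap_of_odd_orderOf ⟨_, hc.ne_one⟩ hodd huv
    (hfix hx.1 hy.1 hz.1) (hfix hx.2.1 hy.2.1 hz.2.1)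
  have hc_uv' := properPowerGraph_reachable_swap_of_odd_orderOf ⟨_, hc.ne_one⟩ hodd huv'
    (hfix hx.2.2.1 hy.2.2.1 hz.2.2.1) (hfix hx.2.2.2 hy.2.2.2 hz.2.2.2)
  exact hc_uv.symm.trans hc_uv'

lemma exists_isSwap_properPowerGraph_reachable_of_orderOf_eq_two (h8 : 8 ≤ Fintype.card α)
    (σ : {g : Perm α // g ≠ 1}) (hσ : orderOf σ.1 = 2) :
    ∃ τ : {g : Perm α // g ≠ 1}, τ.1.IsSwap ∧ (properPowerGraph (Perm α)).Reachable σ τ := by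
  obtain ⟨ρ, hcomm, hρ, hρ_supp⟩ : ∃ ρ : {g : Perm α // g ≠ 1}, Commute σ.1 ρ.1 ∧
      orderOf ρ.1 = 3 ∧ #ρ.1.support + 2 ≤ Fintype.card α := by
    by_cases hfix : #σ.1.support + 3 ≤ Fintype.card α
    · obtain ⟨x, y, z, hxy, hxz, hyz, hx, hy, hz⟩ :=
        exists_triple_notMem_of_card_add_three_le _ hfix
      have hc := isThreeCycle_swap_mul_swap_same hxy hxz hyz
      refine ⟨⟨_, hc.ne_one⟩, Disjoint.commute fun w => ?_, hc.orderOf, by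
        rw [hc.card_support]; omega⟩
      by_cases hw : w = x ∨ w = y ∨ w = z
      · left
        rcases hw with rfl | rfl | rfl <;> exact notMem_support.mp ‹_›
      · right
        push Not at hw
        rw [mul_apply, swap_apply_of_ne_of_ne hw.1 hw.2.2, swap_apply_of_ne_of_ne hw.1 hw.2.1]
    · have hp : (orderOf σ.1).Prime := hσ ▸ Nat.prime_two
      have hcycles : 2 < #σ.1.cycleFactorsFinset := by
        have := card_support_eq_card_cycleFactorsFinset_mul hp
        rw [hσ] at this
        omega
      obtain ⟨c₁, hc₁, c₂, hc₂, c₃, hc₃, h₁₂, h₁₃, h₂₃⟩ := two_lt_card.mp hcycles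
      have hτ := isThreeCycle_swap_mul_swap_same (α := σ.1.cycleFactorsFinset)
        (a := ⟨c₁, hc₁⟩) (b := ⟨c₂, hc₂⟩) (c := ⟨c₃, hc₃⟩) (by simpa) (by simpa) (by simpa)
      obtain ⟨k, hcomm, hk, hk_supp⟩ := exists_commute_orderOf_eq_of_perm_cycleFactorsFinset hp _
      refine ⟨⟨k, fun h => ?_⟩, hcomm, hk.trans hτ.orderOf, ?_⟩
      · simp [h, hτ.orderOf] at hk
      · rw [hk_supp, hτ.card_support, hσ]
        omega
  obtain ⟨τ, hτ, hρτ⟩ := exists_isSwap_properPowerGraph_reachable_of_odd_orderOf ρ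
    (by rw [hρ]; decide) hρ_supp
  refine ⟨τ, hτ, .trans ?_ hρτ⟩
  exact properPowerGraph_reachable_of_commute_of_coprime hcomm (by rw [hσ, hρ]; decide)

lemma exists_isSwap_properPowerGraph_reachable_of_prime (h8 : 8 ≤ Fintype.card α)
    (h1 : ¬ (Fintype.card α).Prime) (h2 : ¬ (Fintype.card α - 1).Prime)
    (σ : {g : Perm α // g ≠ 1}) (hp : (orderOf σ.1).Prime) :
    ∃ τ : {g : Perm α // g ≠ 1}, τ.1.IsSwap ∧ (properPowerGraph (Perm α)).Reachable σ τ := by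
  rcases hp.eq_two_or_odd' with h | hodd
  · exact exists_isSwap_properPowerGraph_reachable_of_orderOf_eq_two h8 σ h
  by_cases hfix : #σ.1.support + 2 ≤ Fintype.card α
  · exact exists_isSwap_properPowerGraph_reachable_of_odd_orderOf σ hodd hfix
  obtain ⟨ψ, hcomm, hψ⟩ : ∃ ψ : {g : Perm α // g ≠ 1}, Commute σ.1 ψ.1 ∧ orderOf ψ.1 = 2 := by
    have hcycles : 1 < #σ.1.cycleFactorsFinset := by
      have hcard := card_support_eq_card_cycleFactorsFinset_mul hp
      have hle : #σ.1.support ≤ Fintype.card α := card_le_univ _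
      by_contra! h
      interval_cases #σ.1.cycleFactorsFinset
      · omega
      · obtain h | h : orderOf σ.1 = Fintype.card α - 1 ∨ orderOf σ.1 = Fintype.card α := by
          omega
        exacts [h2 (h ▸ hp), h1 (h ▸ hp)]
    obtain ⟨c₁, hc₁, c₂, hc₂, h₁₂⟩ := one_lt_card.mp hcycles
    have hτ : (swap (⟨c₁, hc₁⟩ : σ.1.cycleFactorsFinset) ⟨c₂, hc₂⟩).IsSwap :=
      ⟨_, _, by simpa, rfl⟩
    obtain ⟨k, hcomm, hk, -⟩ := exists_commute_orderOf_eq_of_perm_cycleFactorsFinset hp _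
    refine ⟨⟨k, fun h => ?_⟩, hcomm, hk.trans hτ.orderOf⟩
    simp [h, hτ.orderOf] at hk
  obtain ⟨τ, hτ, hψτ⟩ := exists_isSwap_properPowerGraph_reachable_of_orderOf_eq_two h8 ψ hψ
  refine ⟨τ, hτ, .trans ?_ hψτ⟩
  exact properPowerGraph_reachable_of_commute_of_coprime hcomm
    (by rw [hψ]; exact Nat.coprime_two_right.mpr hodd)

lemma exists_isSwap_properPowerGraph_reachable (h8 : 8 ≤ Fintype.card α)
    (h1 : ¬ (Fintype.card α).Prime) (h2 : ¬ (Fintype.card α - 1).Prime)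
    (σ : {g : Perm α // g ≠ 1}) :
    ∃ τ : {g : Perm α // g ≠ 1}, τ.1.IsSwap ∧ (properPowerGraph (Perm α)).Reachable σ τ := by
  set p := (orderOf σ.1).minFac
  have hp : p.Prime := Nat.minFac_prime (orderOf_eq_one_iff.not.mpr σ.2)
  have hσ' : orderOf (σ.1 ^ (orderOf σ.1 / p)) = p :=
    orderOf_pow_orderOf_div (orderOf_pos _).ne' (Nat.minFac_dvd _)
  let σ' : {g : Perm α // g ≠ 1} :=
    ⟨σ.1 ^ (orderOf σ.1 / p), fun h => hp.ne_one (by rw [← hσ', h, orderOf_one])⟩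
  obtain ⟨τ, hτ, hσ'τ⟩ := exists_isSwap_properPowerGraph_reachable_of_prime h8 h1 h2 σ'
    (hσ' ▸ hp)
  exact ⟨τ, hτ, (properPowerGraph_reachable_of_eq_pow (x := σ') rfl).symm.trans hσ'τ⟩

theorem properPowerGraph_connected (h8 : 8 ≤ Fintype.card α)
    (h1 : ¬ (Fintype.card α).Prime) (h2 : ¬ (Fintype.card α - 1).Prime) :
    (properPowerGraph (Perm α)).Connected := by
  have : Nontrivial α := Fintype.one_lt_card_iff_nontrivial.mp (by omega)
  obtain ⟨u, v, huv⟩ := exists_pair_ne α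
  refine (SimpleGraph.connected_iff _).mpr
    ⟨fun σ σ' => ?_, ⟨⟨swap u v, swap_eq_one_iff.not.mpr huv⟩⟩⟩
  obtain ⟨τ, hτ, hστ⟩ := exists_isSwap_properPowerGraph_reachable h8 h1 h2 σ
  obtain ⟨τ', hτ', hσ'τ'⟩ := exists_isSwap_properPowerGraph_reachable h8 h1 h2 σ'
  exact hστ.trans ((properPowerGraph_reachable_of_isSwap (by omega) hτ hτ').trans hσ'τ'.symm)

end Equiv.Perm

theorem stmt_18 (n : ℕ) (hn : 8 ≤ n) (h1 : ¬ n.Prime) (h2 : ¬ (n - 1).Prime) :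
    (properPowerGraph (Equiv.Perm (Fin n))).Connected :=
  Equiv.Perm.properPowerGraph_connected (by simpa) (by simpa) (by simpa)
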